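/- arXiv:2305.07951 — 2 statements merged into one kernel-verified Lean document; each statement's English description precedes it below -/
import Mathlib

section
/- Let 𝓗 be a nonzero complex Hilbert space. The Fubini–Study distance d_FS on ℙ𝓗, defined by d_FS(ℂΨ, ℂΩ) = arccos ⟪ℂΨ, ℂΩ⟫, is a metric on ℙ𝓗, and it is equivalent to the chord metric: for all Ψ, Ω ∈ 𝓗∖{0}, d_chd(ℂΨ, ℂΩ) ≤ d_FS(ℂΨ, ℂΩ) ≤ (π√2/4) · d_chd(ℂΨ, ℂΩ). -/
noncomputable section

/-- Two nonzero vectors are equivalent iff they span the same complex line. -/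
def projSetoid (H : Type*) [NormedAddCommGroup H] [InnerProductSpace ℂ H] :
    Setoid {v : H // v ≠ 0} where
  r Ψ Ω := ∃ c : ℂ, (Ω : H) = c • (Ψ : H)
  iseqv := by
    refine ⟨fun Ψ => ⟨1, (one_smul ℂ (Ψ : H)).symm⟩, ?_, ?_⟩
    · rintro Ψ Ω ⟨c, hc⟩
      have hc0 : c ≠ 0 := by
        intro h
        apply Ω.2
        rw [h, zero_smul] at hc
        exact hc
      exact ⟨c⁻¹, by rw [hc, smul_smul, inv_mul_cancel₀ hc0, one_smul]⟩
    · rintro Ψ Ω Ξ ⟨c, hc⟩ ⟨d, hd⟩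
      exact ⟨d * c, by rw [hd, hc, smul_smul]⟩

/-- The projective Hilbert space `ℙ𝓗`: the space of rays (one-dimensional subspaces). -/
def ProjH (H : Type*) [NormedAddCommGroup H] [InnerProductSpace ℂ H] :=
  Quotient (projSetoid H)

/-- The canonical projection `p : 𝓗∖{0} → ℙ𝓗`, `Ψ ↦ ℂΨ`. -/
def ProjH.mk {H : Type*} [NormedAddCommGroup H] [InnerProductSpace ℂ H]
    (v : {v : H // v ≠ 0}) : ProjH H :=
  Quotient.mk (projSetoid H) v

/-!
Viewing `H` as a real inner product space with `⟪x, y⟫_ℝ = re ⟪x, y⟫`, the Fubini–Study distance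
of `x` and `y` is the least real angle between `x` and a phase multiple `c • y`, `|c| = 1`: that
angle is `arccos (re (c ⟪x, y⟫) / (‖x‖ ‖y‖))`, and `c` can be chosen to make `c ⟪x, y⟫` real and
nonnegative. Phases act by isometries, so the triangle inequality for angles, applied with
optimal phases, gives the one for `d_FS`.

For unit vectors, `‖x - c • y‖ = 2 sin (angle x (c • y) / 2)`, so the chord distance is
`2 sin (d_FS / 2)`. Since `d_FS ≤ π / 2`, the bounds reduce to `2 sin (θ / 2) ≤ θ` and to the
concavity estimate `sin t ≥ (2 √2 / π) t` on `[0, π / 4]`.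
-/

open Real InnerProductGeometry

lemma Complex.exists_norm_eq_one_mul_eq_norm (z : ℂ) : ∃ c : ℂ, ‖c‖ = 1 ∧ c * z = ‖z‖ := by
  refine ⟨Complex.exp (↑(-z.arg) * Complex.I), Complex.norm_exp_ofReal_mul_I _, ?_⟩
  conv_lhs => rw [← Complex.norm_mul_exp_arg_mul_I z]
  rw [mul_left_comm, ← Complex.exp_add]
  simp

lemma Real.mul_le_sin_of_le_pi_div_four {x : ℝ} (hx : 0 ≤ x) (hx' : x ≤ π / 4) :
    2 * √2 / π * x ≤ sin x := by
  have hπ := pi_pos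
  have hconcave := strictConcaveOn_sin_Icc.concaveOn.2 (x := 0) (y := π / 4) ⟨le_rfl, hπ.le⟩
    ⟨by positivity, by linarith⟩ (sub_nonneg.2 ((div_le_one (by positivity)).2 hx'))
    (div_nonneg hx (by positivity : 0 ≤ π / 4)) (sub_add_cancel _ _)
  simp only [smul_eq_mul, mul_zero, zero_add, sin_zero, sin_pi_div_four] at hconcave
  rw [div_mul_cancel₀ _ (by positivity)] at hconcave
  calc 2 * √2 / π * x = x / (π / 4) * (√2 / 2) := by ring
    _ ≤ sin x := hconcave

lemma InnerProductGeometry.norm_sub_eq_two_mul_sin_half_angle {V : Type*} [NormedAddCommGroup V]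
    [InnerProductSpace ℝ V] {x y : V} (hx : ‖x‖ = 1) (hy : ‖y‖ = 1) :
    ‖x - y‖ = 2 * sin (angle x y / 2) := by
  have hsin : 0 ≤ sin (angle x y / 2) := sin_nonneg_of_nonneg_of_le_pi
    (by linarith [angle_nonneg x y]) (by linarith [angle_le_pi x y, pi_pos])
  have hcos : cos (angle x y) = 1 - 2 * sin (angle x y / 2) ^ 2 := by
    rw [← cos_two_mul_eq_one_sub, mul_div_cancel₀ _ two_ne_zero]
  rw [← sq_eq_sq₀ (norm_nonneg _) (by positivity), sq,
    norm_sub_sq_eq_norm_sq_add_norm_sq_sub_two_mul_norm_mul_norm_mul_cos_angle, hx, hy, hcos]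
  ring

section FubiniStudy

attribute [local instance] InnerProductSpace.complexToReal

variable {H : Type*} [NormedAddCommGroup H] [InnerProductSpace ℂ H]

def fubiniStudyDist (x y : H) : ℝ := arccos (‖inner ℂ x y‖ / (‖x‖ * ‖y‖))

lemma fubiniStudyDist_comm (x y : H) : fubiniStudyDist x y = fubiniStudyDist y x := by
  rw [fubiniStudyDist, fubiniStudyDist, norm_inner_symm, mul_comm ‖x‖]

lemma fubiniStudyDist_smul_left (x y : H) {c : ℂ} (hc : c ≠ 0) :
    fubiniStudyDist (c • x) y = fubiniStudyDist x y := by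
  rw [fubiniStudyDist, fubiniStudyDist, inner_smul_left, norm_mul, norm_smul, RCLike.norm_conj,
    mul_assoc, mul_div_mul_left _ _ (norm_ne_zero_iff.2 hc)]

lemma fubiniStudyDist_smul_right (x y : H) {c : ℂ} (hc : c ≠ 0) :
    fubiniStudyDist x (c • y) = fubiniStudyDist x y := by
  rw [fubiniStudyDist_comm, fubiniStudyDist_smul_left y x hc, fubiniStudyDist_comm]

lemma angle_smul_right_of_norm_eq_one (x y : H) {c : ℂ} (hc : ‖c‖ = 1) :
    angle x (c • y) = arccos ((c * inner ℂ x y).re / (‖x‖ * ‖y‖)) := by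
  rw [angle, real_inner_eq_re_inner ℂ, inner_smul_right, norm_smul, hc, one_mul,
    RCLike.re_to_complex]

lemma angle_smul_smul_of_norm_eq_one (x y : H) {c : ℂ} (hc : ‖c‖ = 1) :
    angle (c • x) (c • y) = angle x y := by
  rw [angle, angle, real_inner_eq_re_inner ℂ, real_inner_eq_re_inner ℂ, inner_smul_left,
    inner_smul_right, ← mul_assoc, Complex.conj_mul', norm_smul, norm_smul, hc]
  simp

lemma fubiniStudyDist_le_angle_smul (x y : H) {c : ℂ} (hc : ‖c‖ = 1) :
    fubiniStudyDist x y ≤ angle x (c • y) := by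
  rw [angle_smul_right_of_norm_eq_one x y hc]
  refine arccos_le_arccos (div_le_div_of_nonneg_right ?_ (by positivity))
  calc (c * inner ℂ x y).re ≤ ‖c * inner ℂ x y‖ := Complex.re_le_norm _
    _ = ‖inner ℂ x y‖ := by rw [norm_mul, hc, one_mul]

lemma exists_angle_smul_eq_fubiniStudyDist (x y : H) :
    ∃ c : ℂ, ‖c‖ = 1 ∧ angle x (c • y) = fubiniStudyDist x y := by
  obtain ⟨c, hc, hcz⟩ := Complex.exists_norm_eq_one_mul_eq_norm (inner ℂ x y)
  refine ⟨c, hc, ?_⟩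
  rw [angle_smul_right_of_norm_eq_one x y hc, hcz, Complex.ofReal_re, fubiniStudyDist]

lemma fubiniStudyDist_triangle (x y z : H) :
    fubiniStudyDist x z ≤ fubiniStudyDist x y + fubiniStudyDist y z := by
  obtain ⟨a, ha, hxy⟩ := exists_angle_smul_eq_fubiniStudyDist x y
  obtain ⟨b, hb, hyz⟩ := exists_angle_smul_eq_fubiniStudyDist y z
  calc fubiniStudyDist x z ≤ angle x ((a * b) • z) :=
        fubiniStudyDist_le_angle_smul x z (by rw [norm_mul, ha, hb, one_mul])
    _ ≤ angle x (a • y) + angle (a • y) ((a * b) • z) := angle_le_angle_add_angle _ _ _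
    _ = fubiniStudyDist x y + fubiniStudyDist y z := by
      rw [mul_smul, angle_smul_smul_of_norm_eq_one _ _ ha, hxy, hyz]

lemma fubiniStudyDist_self {x : H} (hx : x ≠ 0) : fubiniStudyDist x x = 0 := by
  refine le_antisymm ?_ (arccos_nonneg _)
  simpa [angle_self hx] using fubiniStudyDist_le_angle_smul x x (c := 1) norm_one

lemma exists_smul_eq_of_fubiniStudyDist_eq_zero {x y : H} (h : fubiniStudyDist x y = 0) :
    ∃ c : ℂ, y = c • x := by
  obtain ⟨a, ha, hxy⟩ := exists_angle_smul_eq_fubiniStudyDist x y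
  obtain ⟨-, r, -, hr⟩ := angle_eq_zero_iff.1 (hxy.trans h)
  have ha0 : a ≠ 0 := norm_ne_zero_iff.1 (ha.trans_ne one_ne_zero)
  refine ⟨a⁻¹ * r, ?_⟩
  rw [mul_smul, Complex.coe_smul, ← hr, inv_smul_smul₀ ha0]

lemma iInf_norm_sub_smul_eq_two_mul_sin_half_fubiniStudyDist {x y : H} (hx : ‖x‖ = 1)
    (hy : ‖y‖ = 1) :
    ⨅ c : Metric.sphere (0 : ℂ) 1, ‖x - (c : ℂ) • y‖ = 2 * sin (fubiniStudyDist x y / 2) := by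
  have hchord : ∀ c : ℂ, ‖c‖ = 1 → ‖x - c • y‖ = 2 * sin (angle x (c • y) / 2) := fun c hc =>
    norm_sub_eq_two_mul_sin_half_angle hx (by rw [norm_smul, hc, hy, one_mul])
  obtain ⟨a, ha, hxy⟩ := exists_angle_smul_eq_fubiniStudyDist x y
  refine IsLeast.csInf_eq ⟨⟨⟨a, by simpa using ha⟩, by simp [hchord a ha, hxy]⟩, ?_⟩
  rintro _ ⟨⟨c, hc⟩, rfl⟩
  rw [mem_sphere_zero_iff_norm] at hc
  simp only [hchord c hc]
  have hdist : 0 ≤ fubiniStudyDist x y := arccos_nonneg _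
  gcongr
  exact sin_le_sin_of_le_of_le_pi_div_two (by linarith [pi_pos])
    (by linarith [angle_le_pi x (c • y)]) (by gcongr; exact fubiniStudyDist_le_angle_smul x y hc)

abbrev ProjH.fubiniStudyMetricSpace : MetricSpace (ProjH H) where
  dist := Quotient.lift₂ (fun x y => fubiniStudyDist (x : H) y) <| by
    rintro x₁ y₁ x₂ y₂ ⟨a, ha⟩ ⟨b, hb⟩
    have ha0 : a ≠ 0 := by rintro rfl; exact x₂.2 (by simp [ha])
    have hb0 : b ≠ 0 := by rintro rfl; exact y₂.2 (by simp [hb])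
    simp only [ha, hb, fubiniStudyDist_smul_left _ _ ha0, fubiniStudyDist_smul_right _ _ hb0]
  dist_self := Quotient.ind fun x => fubiniStudyDist_self x.2
  dist_comm := Quotient.ind₂ fun x y => fubiniStudyDist_comm (x : H) y
  dist_triangle := by
    rintro ⟨x⟩ ⟨y⟩ ⟨z⟩
    exact fubiniStudyDist_triangle (x : H) y z
  eq_of_dist_eq_zero := by
    rintro ⟨x⟩ ⟨y⟩ h
    exact Quotient.sound (exists_smul_eq_of_fubiniStudyDist_eq_zero h)

end FubiniStudy

theorem fubini_study_metric_general (H : Type*) [NormedAddCommGroup H] [InnerProductSpace ℂ H] :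
    ∃ m : MetricSpace (ProjH H),
      -- defining formula: d_FS = arccos of the ray product
      (∀ Ψ Ω : {v : H // v ≠ 0},
        m.dist (ProjH.mk Ψ) (ProjH.mk Ω)
          = Real.arccos (‖(inner ℂ (Ψ : H) (Ω : H) : ℂ)‖ / (‖(Ψ : H)‖ * ‖(Ω : H)‖))) ∧
      -- equivalence with the chord metric d_chd(ℂΨ, ℂΩ) = inf_{λ ∈ U(1)} ‖Ψ − λΩ‖
      (∀ Ψ Ω : {v : H // v ≠ 0}, ‖(Ψ : H)‖ = 1 → ‖(Ω : H)‖ = 1 →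
        (⨅ lam : Metric.sphere (0 : ℂ) 1, ‖(Ψ : H) - (lam : ℂ) • (Ω : H)‖)
            ≤ m.dist (ProjH.mk Ψ) (ProjH.mk Ω) ∧
          m.dist (ProjH.mk Ψ) (ProjH.mk Ω)
            ≤ (Real.pi * Real.sqrt 2 / 4)
                * ⨅ lam : Metric.sphere (0 : ℂ) 1, ‖(Ψ : H) - (lam : ℂ) • (Ω : H)‖) := by
  refine ⟨ProjH.fubiniStudyMetricSpace, fun Ψ Ω => rfl, fun Ψ Ω hΨ hΩ => ?_⟩
  change _ ≤ fubiniStudyDist (Ψ : H) Ω ∧ fubiniStudyDist (Ψ : H) Ω ≤ _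
  rw [iInf_norm_sub_smul_eq_two_mul_sin_half_fubiniStudyDist hΨ hΩ]
  set θ := fubiniStudyDist (Ψ : H) Ω
  have hθ₀ : 0 ≤ θ := arccos_nonneg _
  have hθ₁ : θ ≤ π / 2 := arccos_le_pi_div_two.2 (by positivity)
  have hjordan := mul_le_sin_of_le_pi_div_four (x := θ / 2) (by linarith) (by linarith)
  constructor
  · linarith [sin_le (by linarith : 0 ≤ θ / 2)]
  · calc θ = π * √2 / 4 * (2 * (2 * √2 / π * (θ / 2))) := by
          field_simp
          rw [sq_sqrt zero_le_two]
          ring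
      _ ≤ π * √2 / 4 * (2 * sin (θ / 2)) := by gcongr

/-- The Fubini–Study distance `d_FS(ℂΨ, ℂΩ) = arccos ⟪ℂΨ, ℂΩ⟫` is a metric on `ℙ𝓗`, and it is
equivalent to the chord metric: `d_chd ≤ d_FS ≤ (π√2/4) d_chd`. -/
theorem fubini_study_metric (H : Type*) [NormedAddCommGroup H] [InnerProductSpace ℂ H]
    [CompleteSpace H] [Nontrivial H] :
    ∃ m : MetricSpace (ProjH H),
      -- defining formula: d_FS = arccos of the ray product
      (∀ Ψ Ω : {v : H // v ≠ 0},
        m.dist (ProjH.mk Ψ) (ProjH.mk Ω)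
          = Real.arccos (‖(inner ℂ (Ψ : H) (Ω : H) : ℂ)‖ / (‖(Ψ : H)‖ * ‖(Ω : H)‖))) ∧
      -- equivalence with the chord metric d_chd(ℂΨ, ℂΩ) = inf_{λ ∈ U(1)} ‖Ψ − λΩ‖
      (∀ Ψ Ω : {v : H // v ≠ 0}, ‖(Ψ : H)‖ = 1 → ‖(Ω : H)‖ = 1 →
        (⨅ lam : Metric.sphere (0 : ℂ) 1, ‖(Ψ : H) - (lam : ℂ) • (Ω : H)‖)
            ≤ m.dist (ProjH.mk Ψ) (ProjH.mk Ω) ∧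
          m.dist (ProjH.mk Ψ) (ProjH.mk Ω)
            ≤ (Real.pi * Real.sqrt 2 / 4)
                * ⨅ lam : Metric.sphere (0 : ℂ) 1, ‖(Ψ : H) - (lam : ℂ) • (Ω : H)‖) :=
  fubini_study_metric_general H

end
end

section
/- Let 𝓗 be a nonzero complex Hilbert space and Ψ ∈ 𝕊𝓗, and let 𝔹₁(ℂΨ) be the open unit ball around ℂΨ in ℙ𝓗 with respect to the gap metric (equivalently, 𝔹₁(ℂΨ) = {ℂΩ : ⟨Ψ, Ω⟩ ≠ 0}). Then the maps σ_Ψ : 𝕊𝓗 ∖ (𝕊𝓗 ∩ (ℂΨ)^⊥) → (ℂΨ)^⊥ × U(1) given by σ_Ψ(Ω) = (Ω/⟨Ψ,Ω⟩ − Ψ, ⟨Ψ,Ω⟩/|⟨Ψ,Ω⟩|), and τ_Ψ : 𝔹₁(ℂΨ) → (ℂΨ)^⊥ given by τ_Ψ(ℂΩ) = Ω/⟨Ψ,Ω⟩ − Ψ (where Ω is any nonzero representative), are well-defined homeomorphisms; the inverses are σ_Ψ⁻¹(Φ, λ) = λ(Φ + Ψ)/√(1 + ‖Φ‖²) and τ_Ψ⁻¹(Φ)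 = ℂ(Φ + Ψ). -/
noncomputable section

/-- `ℙ𝓗` carries the quotient topology induced by the canonical projection. -/
instance (H : Type*) [NormedAddCommGroup H] [InnerProductSpace ℂ H] :
    TopologicalSpace (ProjH H) :=
  TopologicalSpace.coinduced ProjH.mk inferInstance

/-!
If `⟨Ψ, Ω⟩ ≠ 0`, the rescaled vector `Ω / ⟨Ψ, Ω⟩` is the unique multiple of `Ω` of the form
`Φ + Ψ` with `Φ ⊥ Ψ`. The resulting `Φ = Ω / ⟨Ψ, Ω⟩ - Ψ` does not change when `Ω` is scaled,
so it descends to the ray `ℂΩ`; on the sphere the lost scale is the phase of `⟨Ψ, Ω⟩` together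
with the norm `‖Φ + Ψ‖ = √(1 + ‖Φ‖²)` (Pythagoras). Continuity on `ℙ𝓗` holds because the gap
ball is open, so the projection restricted over it is still a quotient map.
-/

open scoped InnerProductSpace
open Submodule Topology

theorem sqrt_one_add_sq_pos (x : ℝ) : 0 < √(1 + x ^ 2) :=
  Real.sqrt_pos.mpr (by positivity)

theorem sqrt_one_add_sq_ofReal_inv_ne_zero (x : ℝ) : (√(1 + x ^ 2) : ℂ)⁻¹ ≠ 0 :=
  inv_ne_zero (Complex.ofReal_ne_zero.mpr (sqrt_one_add_sq_pos x).ne')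

theorem div_norm_mem_sphere {z : ℂ} (hz : z ≠ 0) : z / (‖z‖ : ℂ) ∈ Metric.sphere (0 : ℂ) 1 := by
  rw [mem_sphere_zero_iff_norm, norm_div, Complex.norm_real, norm_norm,
    div_self (norm_ne_zero_iff.mpr hz)]

theorem ofReal_mul_div_norm {r : ℝ} (hr : 0 < r) {z : ℂ} (hz : ‖z‖ = 1) :
    (r * z) / (‖(r : ℂ) * z‖ : ℂ) = z := by
  rw [norm_mul, hz, mul_one, Complex.norm_real, Real.norm_of_nonneg hr.le,
    mul_div_cancel_left₀ _ (Complex.ofReal_ne_zero.mpr hr.ne')]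

universe u

variable {H : Type u} [NormedAddCommGroup H] [InnerProductSpace ℂ H]

section Orthogonal

variable {Ψ Φ : H}

theorem inner_add_self_of_mem_orthogonal (hΨ : ‖Ψ‖ = 1) (hΦ : Φ ∈ (ℂ ∙ Ψ)ᗮ) :
    ⟪Ψ, Φ + Ψ⟫_ℂ = 1 := by
  rw [inner_add_right, mem_orthogonal_singleton_iff_inner_right.mp hΦ,
    inner_self_eq_norm_sq_to_K, hΨ]
  norm_num

theorem add_self_ne_zero_of_mem_orthogonal (hΨ : ‖Ψ‖ = 1) (hΦ : Φ ∈ (ℂ ∙ Ψ)ᗮ) :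
    Φ + Ψ ≠ 0 := by
  intro h
  simpa [h] using inner_add_self_of_mem_orthogonal hΨ hΦ

theorem norm_add_self_of_mem_orthogonal (hΨ : ‖Ψ‖ = 1) (hΦ : Φ ∈ (ℂ ∙ Ψ)ᗮ) :
    ‖Φ + Ψ‖ = √(1 + ‖Φ‖ ^ 2) := by
  have hpyth := norm_add_sq_eq_norm_sq_add_norm_sq_of_inner_eq_zero Φ Ψ
    (mem_orthogonal_singleton_iff_inner_left.mp hΦ)
  rw [hΨ, mul_one] at hpyth
  rw [eq_comm, Real.sqrt_eq_iff_mul_self_eq (by positivity) (norm_nonneg _), hpyth, add_comm, sq]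

end Orthogonal

def affineChart (Ψ v : H) : H := (⟪Ψ, v⟫_ℂ)⁻¹ • v - Ψ

section AffineChart

variable {Ψ Φ v : H}

theorem affineChart_add_self : affineChart Ψ v + Ψ = (⟪Ψ, v⟫_ℂ)⁻¹ • v :=
  sub_add_cancel _ _

theorem affineChart_smul {c : ℂ} (hc : c ≠ 0) : affineChart Ψ (c • v) = affineChart Ψ v := by
  rw [affineChart, affineChart, inner_smul_right, smul_smul, mul_inv_rev, mul_assoc,
    inv_mul_cancel₀ hc, mul_one]

theorem affineChart_mem_orthogonal (hΨ : ‖Ψ‖ = 1) (hv : ⟪Ψ, v⟫_ℂ ≠ 0) :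
    affineChart Ψ v ∈ (ℂ ∙ Ψ)ᗮ := by
  rw [mem_orthogonal_singleton_iff_inner_right, affineChart, inner_sub_right, inner_smul_right,
    inv_mul_cancel₀ hv, inner_self_eq_norm_sq_to_K, hΨ]
  norm_num

theorem affineChart_add_self_of_mem_orthogonal (hΨ : ‖Ψ‖ = 1) (hΦ : Φ ∈ (ℂ ∙ Ψ)ᗮ) :
    affineChart Ψ (Φ + Ψ) = Φ := by
  rw [affineChart, inner_add_self_of_mem_orthogonal hΨ hΦ, inv_one, one_smul,
    add_sub_cancel_right]

theorem affineChart_smul_add_self_of_mem_orthogonal (hΨ : ‖Ψ‖ = 1) (hΦ : Φ ∈ (ℂ ∙ Ψ)ᗮ) {c : ℂ}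
    (hc : c ≠ 0) : affineChart Ψ (c • (Φ + Ψ)) = Φ := by
  rw [affineChart_smul hc, affineChart_add_self_of_mem_orthogonal hΨ hΦ]

theorem continuousOn_affineChart (Ψ : H) : ContinuousOn (affineChart Ψ) {v | ⟪Ψ, v⟫_ℂ ≠ 0} :=
  (((continuous_const.inner continuous_id).continuousOn.inv₀ fun _ hv => hv).smul
    continuousOn_id).sub continuousOn_const

end AffineChart

section Sphere

variable {Ψ Φ Ω : H}

theorem inv_norm_inner_eq_sqrt (hΨ : ‖Ψ‖ = 1) (hΩ : ‖Ω‖ = 1) (h : ⟪Ψ, Ω⟫_ℂ ≠ 0) :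
    ‖⟪Ψ, Ω⟫_ℂ‖⁻¹ = √(1 + ‖affineChart Ψ Ω‖ ^ 2) := by
  rw [← norm_add_self_of_mem_orthogonal hΨ (affineChart_mem_orthogonal hΨ h),
    affineChart_add_self, norm_smul, norm_inv, hΩ, mul_one]

def sphereChartSymm (Ψ Φ : H) (z : ℂ) : H := (√(1 + ‖Φ‖ ^ 2) : ℂ)⁻¹ • z • (Φ + Ψ)

theorem inner_sphereChartSymm (hΨ : ‖Ψ‖ = 1) (hΦ : Φ ∈ (ℂ ∙ Ψ)ᗮ) (z : ℂ) :
    ⟪Ψ, sphereChartSymm Ψ Φ z⟫_ℂ = (√(1 + ‖Φ‖ ^ 2) : ℂ)⁻¹ * z := by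
  rw [sphereChartSymm, smul_smul, inner_smul_right, inner_add_self_of_mem_orthogonal hΨ hΦ,
    mul_one]

theorem inner_sphereChartSymm_ne_zero (hΨ : ‖Ψ‖ = 1) (hΦ : Φ ∈ (ℂ ∙ Ψ)ᗮ) {z : ℂ}
    (hz : ‖z‖ = 1) : ⟪Ψ, sphereChartSymm Ψ Φ z⟫_ℂ ≠ 0 := by
  rw [inner_sphereChartSymm hΨ hΦ]
  exact mul_ne_zero (sqrt_one_add_sq_ofReal_inv_ne_zero _) (norm_ne_zero_iff.mp (hz ▸ one_ne_zero))

theorem norm_sphereChartSymm (hΨ : ‖Ψ‖ = 1) (hΦ : Φ ∈ (ℂ ∙ Ψ)ᗮ) {z : ℂ} (hz : ‖z‖ = 1) :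
    ‖sphereChartSymm Ψ Φ z‖ = 1 := by
  rw [sphereChartSymm, norm_smul, norm_smul, hz, one_mul, norm_add_self_of_mem_orthogonal hΨ hΦ,
    norm_inv, Complex.norm_real, Real.norm_of_nonneg (Real.sqrt_nonneg _),
    inv_mul_cancel₀ (sqrt_one_add_sq_pos ‖Φ‖).ne']

theorem affineChart_sphereChartSymm (hΨ : ‖Ψ‖ = 1) (hΦ : Φ ∈ (ℂ ∙ Ψ)ᗮ) {z : ℂ} (hz : ‖z‖ = 1) :
    affineChart Ψ (sphereChartSymm Ψ Φ z) = Φ := by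
  rw [sphereChartSymm, smul_smul]
  exact affineChart_smul_add_self_of_mem_orthogonal hΨ hΦ
    (mul_ne_zero (sqrt_one_add_sq_ofReal_inv_ne_zero _) (norm_ne_zero_iff.mp (hz ▸ one_ne_zero)))

theorem inner_sphereChartSymm_div_norm (hΨ : ‖Ψ‖ = 1) (hΦ : Φ ∈ (ℂ ∙ Ψ)ᗮ) {z : ℂ}
    (hz : ‖z‖ = 1) :
    ⟪Ψ, sphereChartSymm Ψ Φ z⟫_ℂ / (‖⟪Ψ, sphereChartSymm Ψ Φ z⟫_ℂ‖ : ℂ) = z := by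
  rw [inner_sphereChartSymm hΨ hΦ, ← Complex.ofReal_inv]
  exact ofReal_mul_div_norm (inv_pos.mpr (sqrt_one_add_sq_pos _)) hz

theorem continuous_sphereChartSymm (Ψ : H) :
    Continuous fun P : H × ℂ => sphereChartSymm Ψ P.1 P.2 := by
  have hsqrt : Continuous fun P : H × ℂ => (√(1 + ‖P.1‖ ^ 2) : ℂ) :=
    Complex.continuous_ofReal.comp (continuous_const.add (continuous_fst.norm.pow 2)).sqrt
  exact (hsqrt.inv₀ fun _ => Complex.ofReal_ne_zero.mpr (sqrt_one_add_sq_pos _).ne').smul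
    (continuous_snd.smul (continuous_fst.add continuous_const))

theorem sphereChartSymm_affineChart (hΨ : ‖Ψ‖ = 1) (hΩ : ‖Ω‖ = 1) (h : ⟪Ψ, Ω⟫_ℂ ≠ 0) :
    sphereChartSymm Ψ (affineChart Ψ Ω) (⟪Ψ, Ω⟫_ℂ / (‖⟪Ψ, Ω⟫_ℂ‖ : ℂ)) = Ω := by
  have hnorm : (‖⟪Ψ, Ω⟫_ℂ‖ : ℂ) ≠ 0 := Complex.ofReal_ne_zero.mpr (norm_ne_zero_iff.mpr h)
  rw [sphereChartSymm, ← inv_norm_inner_eq_sqrt hΨ hΩ h, affineChart_add_self, smul_smul,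
    smul_smul, Complex.ofReal_inv, inv_inv]
  convert one_smul ℂ Ω using 2
  field_simp

/-- The chart `σ_Ψ` of the unit sphere. -/
def sphereChart (hΨ : ‖Ψ‖ = 1) :
    {Ω : H // ‖Ω‖ = 1 ∧ ⟪Ψ, Ω⟫_ℂ ≠ 0} ≃ₜ ((ℂ ∙ Ψ)ᗮ × Metric.sphere (0 : ℂ) 1) where
  toFun Ω := (⟨affineChart Ψ Ω, affineChart_mem_orthogonal hΨ Ω.2.2⟩,
    ⟨⟪Ψ, (Ω : H)⟫_ℂ / (‖⟪Ψ, (Ω : H)⟫_ℂ‖ : ℂ), div_norm_mem_sphere Ω.2.2⟩)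
  invFun P := ⟨sphereChartSymm Ψ P.1 P.2, norm_sphereChartSymm hΨ P.1.2 (norm_eq_of_mem_sphere P.2),
    inner_sphereChartSymm_ne_zero hΨ P.1.2 (norm_eq_of_mem_sphere P.2)⟩
  left_inv Ω := Subtype.ext (sphereChartSymm_affineChart hΨ Ω.2.1 Ω.2.2)
  right_inv := fun ⟨Φ, z⟩ => Prod.ext
    (Subtype.ext (affineChart_sphereChartSymm hΨ Φ.2 (norm_eq_of_mem_sphere z)))
    (Subtype.ext (inner_sphereChartSymm_div_norm hΨ Φ.2 (norm_eq_of_mem_sphere z)))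
  continuous_toFun := by
    have hinner : Continuous fun Ω : {Ω : H // ‖Ω‖ = 1 ∧ ⟪Ψ, Ω⟫_ℂ ≠ 0} => ⟪Ψ, (Ω : H)⟫_ℂ :=
      continuous_const.inner continuous_subtype_val
    refine .prodMk (.subtype_mk ?_ _) (.subtype_mk ?_ _)
    · exact (continuousOn_affineChart Ψ).comp_continuous continuous_subtype_val fun Ω => Ω.2.2
    · exact hinner.div (Complex.continuous_ofReal.comp hinner.norm)
        fun Ω => Complex.ofReal_ne_zero.mpr (norm_ne_zero_iff.mpr Ω.2.2)
  continuous_invFun := ((continuous_sphereChartSymm Ψ).comp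
    (continuous_subtype_val.prodMap continuous_subtype_val)).subtype_mk _

end Sphere

namespace ProjH

theorem isQuotientMap_mk : IsQuotientMap (ProjH.mk : {v : H // v ≠ 0} → ProjH H) :=
  isQuotientMap_quotient_mk'

theorem mk_eq_mk_of_eq_smul {v w : {v : H // v ≠ 0}} (c : ℂ) (h : (w : H) = c • (v : H)) :
    mk v = mk w :=
  Quotient.sound ⟨c, h⟩

/-- The open unit ball around `ℂΨ` for the gap metric, in its inner-product description. -/
def unitGapBall (Ψ : H) : Set (ProjH H) :=
  {a | ∃ v : {v : H // v ≠ 0}, mk v = a ∧ ⟪Ψ, (v : H)⟫_ℂ ≠ 0}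

theorem preimage_mk_unitGapBall (Ψ : H) :
    mk ⁻¹' unitGapBall Ψ = {v : {v : H // v ≠ 0} | ⟪Ψ, (v : H)⟫_ℂ ≠ 0} := by
  ext v
  refine ⟨fun ⟨w, hwv, hw⟩ => ?_, fun hv => ⟨v, rfl, hv⟩⟩
  obtain ⟨c, hc⟩ := Quotient.exact hwv
  rw [Set.mem_ofPred_eq, hc, inner_smul_right]
  exact mul_ne_zero (left_ne_zero_of_smul (hc ▸ v.2)) hw

theorem isOpen_unitGapBall (Ψ : H) : IsOpen (unitGapBall Ψ) := by
  rw [← isQuotientMap_mk.isOpen_preimage, preimage_mk_unitGapBall]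
  exact isOpen_ne_fun (continuous_const.inner continuous_subtype_val) continuous_const

/-- Off `unitGapBall Ψ` this takes the junk value `-Ψ`. -/
def affineChart (Ψ : H) : ProjH H → H :=
  Quotient.lift (fun v => _root_.affineChart Ψ v) fun _ w ⟨c, hc⟩ => by
    simp only [hc, _root_.affineChart_smul (left_ne_zero_of_smul (hc ▸ w.2))]

theorem continuousOn_affineChart (Ψ : H) : ContinuousOn (affineChart Ψ) (unitGapBall Ψ) := by
  rw [isQuotientMap_mk.continuousOn_isOpen_iff (isOpen_unitGapBall Ψ), preimage_mk_unitGapBall]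
  exact (_root_.continuousOn_affineChart Ψ).comp continuous_subtype_val.continuousOn
    fun _ hv => hv

theorem affineChart_mem_orthogonal {Ψ : H} (hΨ : ‖Ψ‖ = 1) {a : ProjH H}
    (ha : a ∈ unitGapBall Ψ) : affineChart Ψ a ∈ (ℂ ∙ Ψ)ᗮ := by
  obtain ⟨v, rfl, hv⟩ := ha
  exact _root_.affineChart_mem_orthogonal hΨ hv

/-- The chart `τ_Ψ` of `ℙ𝓗`. -/
def gapBallChart {Ψ : H} (hΨ : ‖Ψ‖ = 1) : unitGapBall Ψ ≃ₜ (ℂ ∙ Ψ)ᗮ where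
  toFun a := ⟨affineChart Ψ a, affineChart_mem_orthogonal hΨ a.2⟩
  invFun Φ := ⟨mk ⟨(Φ : H) + Ψ, add_self_ne_zero_of_mem_orthogonal hΨ Φ.2⟩, _, rfl, by
    rw [inner_add_self_of_mem_orthogonal hΨ Φ.2]; exact one_ne_zero⟩
  left_inv := by
    rintro ⟨_, v, rfl, hv⟩
    refine Subtype.ext (mk_eq_mk_of_eq_smul ⟪Ψ, (v : H)⟫_ℂ ?_)
    change (v : H) = _ • (_root_.affineChart Ψ v + Ψ)
    rw [affineChart_add_self, smul_smul, mul_inv_cancel₀ hv, one_smul]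
  right_inv Φ := Subtype.ext (affineChart_add_self_of_mem_orthogonal hΨ Φ.2)
  continuous_toFun := (continuousOn_affineChart Ψ).domRestrict.subtype_mk _
  continuous_invFun := (isQuotientMap_mk.continuous.comp
    ((continuous_subtype_val.add continuous_const).subtype_mk _)).subtype_mk _

end ProjH

theorem projective_space_charts_general (H : Type*) [NormedAddCommGroup H] [InnerProductSpace ℂ H]
    (Ψ : H) (hΨ : ‖Ψ‖ = 1) :
    (∃ σ : {Ω : H // ‖Ω‖ = 1 ∧ (inner ℂ Ψ Ω : ℂ) ≠ 0} ≃ₜ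
        (↥((Submodule.span ℂ ({Ψ} : Set H))ᗮ) × Metric.sphere (0 : ℂ) 1),
      (∀ Ω : {Ω : H // ‖Ω‖ = 1 ∧ (inner ℂ Ψ Ω : ℂ) ≠ 0},
        (((σ Ω).1 : H) = (inner ℂ Ψ (Ω : H) : ℂ)⁻¹ • (Ω : H) - Ψ ∧
         ((σ Ω).2 : ℂ)
           = (inner ℂ Ψ (Ω : H) : ℂ) / (‖(inner ℂ Ψ (Ω : H) : ℂ)‖ : ℂ))) ∧
      (∀ (Φ : ↥((Submodule.span ℂ ({Ψ} : Set H))ᗮ)) (lam : Metric.sphere (0 : ℂ) 1),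
        ((σ.symm (Φ, lam) : H))
          = ((Real.sqrt (1 + ‖(Φ : H)‖ ^ 2) : ℂ))⁻¹ • ((lam : ℂ) • ((Φ : H) + Ψ)))) ∧
    (∃ τ : {a : ProjH H //
          ∃ v : {v : H // v ≠ 0}, ProjH.mk v = a ∧ (inner ℂ Ψ (v : H) : ℂ) ≠ 0} ≃ₜ
        ↥((Submodule.span ℂ ({Ψ} : Set H))ᗮ),
      (∀ (v : {v : H // v ≠ 0}) (hv : (inner ℂ Ψ (v : H) : ℂ) ≠ 0),
        ((τ ⟨ProjH.mk v, v, rfl, hv⟩ : H)) = (inner ℂ Ψ (v : H) : ℂ)⁻¹ • (v : H) - Ψ) ∧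
      (∀ (Φ : ↥((Submodule.span ℂ ({Ψ} : Set H))ᗮ)) (h : (Φ : H) + Ψ ≠ 0),
        ((τ.symm Φ : ProjH H)) = ProjH.mk ⟨(Φ : H) + Ψ, h⟩)) :=
  ⟨⟨sphereChart hΨ, fun _ => ⟨rfl, rfl⟩, fun _ _ => rfl⟩,
    ⟨ProjH.gapBallChart hΨ, fun _ _ => rfl, fun _ _ => rfl⟩⟩

/-- For a unit vector `Ψ` the maps `σ_Ψ(Ω) = (Ω/⟨Ψ,Ω⟩ − Ψ, ⟨Ψ,Ω⟩/|⟨Ψ,Ω⟩|)`, defined on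
`𝕊𝓗 ∖ (𝕊𝓗 ∩ ℂΨ^⊥)`, and `τ_Ψ(ℂΩ) = Ω/⟨Ψ,Ω⟩ − Ψ`, defined on the open unit gap ball
`𝔹₁(ℂΨ) = {ℂΩ : ⟨Ψ,Ω⟩ ≠ 0}`, are well-defined homeomorphisms onto `ℂΨ^⊥ × U(1)` and `ℂΨ^⊥`
respectively, with inverses `σ_Ψ⁻¹(Φ,λ) = λ(Φ+Ψ)/√(1+‖Φ‖²)` and `τ_Ψ⁻¹(Φ) = ℂ(Φ+Ψ)`. -/
theorem projective_space_charts (H : Type*) [NormedAddCommGroup H] [InnerProductSpace ℂ H]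
    [CompleteSpace H] [Nontrivial H] (Ψ : H) (hΨ : ‖Ψ‖ = 1) :
    (∃ σ : {Ω : H // ‖Ω‖ = 1 ∧ (inner ℂ Ψ Ω : ℂ) ≠ 0} ≃ₜ
        (↥((Submodule.span ℂ ({Ψ} : Set H))ᗮ) × Metric.sphere (0 : ℂ) 1),
      (∀ Ω : {Ω : H // ‖Ω‖ = 1 ∧ (inner ℂ Ψ Ω : ℂ) ≠ 0},
        (((σ Ω).1 : H) = (inner ℂ Ψ (Ω : H) : ℂ)⁻¹ • (Ω : H) - Ψ ∧
         ((σ Ω).2 : ℂ)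
           = (inner ℂ Ψ (Ω : H) : ℂ) / (‖(inner ℂ Ψ (Ω : H) : ℂ)‖ : ℂ))) ∧
      (∀ (Φ : ↥((Submodule.span ℂ ({Ψ} : Set H))ᗮ)) (lam : Metric.sphere (0 : ℂ) 1),
        ((σ.symm (Φ, lam) : H))
          = ((Real.sqrt (1 + ‖(Φ : H)‖ ^ 2) : ℂ))⁻¹ • ((lam : ℂ) • ((Φ : H) + Ψ)))) ∧
    (∃ τ : {a : ProjH H //
          ∃ v : {v : H // v ≠ 0}, ProjH.mk v = a ∧ (inner ℂ Ψ (v : H) : ℂ) ≠ 0} ≃ₜ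
        ↥((Submodule.span ℂ ({Ψ} : Set H))ᗮ),
      (∀ (v : {v : H // v ≠ 0}) (hv : (inner ℂ Ψ (v : H) : ℂ) ≠ 0),
        ((τ ⟨ProjH.mk v, v, rfl, hv⟩ : H)) = (inner ℂ Ψ (v : H) : ℂ)⁻¹ • (v : H) - Ψ) ∧
      (∀ (Φ : ↥((Submodule.span ℂ ({Ψ} : Set H))ᗮ)) (h : (Φ : H) + Ψ ≠ 0),
        ((τ.symm Φ : ProjH H)) = ProjH.mk ⟨(Φ : H) + Ψ, h⟩)) :=
  projective_space_charts_general H Ψ hΨ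
end
end
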